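/- arXiv:2104.09253 — 2 statements merged into one kernel-verified Lean document; each statement's English description precedes it below -/
import Mathlib

section
/- Let F be a free group (on any set of generators). Then the intersection of all terms of the lower central series of F is trivial: ⋂_{i ≥ 0} γ_i F = {1}. In other words, free groups are residually nilpotent. -/
/-!
Write `x ≠ 1` in syllable form `a₀ ^ e₀ ⋯ a_{k-1} ^ e_{k-1}`, with adjacent generators distinct
and all `eᵢ ≠ 0`, and let `a` act on `ℕ → ℤ` by `1 + N_a`, where `(N_a v) i = v (i + 1)` at the
positions `i` with `aᵢ = a` and `0` elsewhere. Adjacent labels differ, so `N_a ^ 2 = 0` and `a ^ e`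
acts by `1 + e • N_a`; in the product only the term taking `eᵢ • N_{aᵢ}` from every factor reaches
coordinate `0` of the image of `Pi.single k 1`, which is therefore `e₀ ⋯ e_{k-1} ≠ 0`.
Each `N_a` lowers the filtration by support `{i < p}` one step, and for units `u` such that `u - 1`
lowers it the number of steps adds up under commutators. So elements of `γ_k` act by some `u` with
`u - 1` lowering it `k + 1` steps, and such a `u` leaves coordinate `0` of `Pi.single k 1` at `0`.
-/

open scoped commutatorElement

section UnitsFiltration

variable {R : Type*} [Ring R] (I : ℕ → AddSubgroup R) [SetLike.GradedMonoid I] (hI : Antitone I)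

def unitsFiltration (m : ℕ) : Subgroup Rˣ where
  carrier := {u | (u : R) - 1 ∈ I m ∧ ((u⁻¹ : Rˣ) : R) - 1 ∈ I m}
  one_mem' := by simp
  mul_mem' := by
    rintro u v ⟨hu, hu'⟩ ⟨hv, hv'⟩
    have mul_sub_one_mem {a b : R} (ha : a - 1 ∈ I m) (hb : b - 1 ∈ I m) : a * b - 1 ∈ I m := by
      rw [show a * b - 1 = (a - 1) * (b - 1) + ((a - 1) + (b - 1)) by noncomm_ring]
      exact add_mem (hI (Nat.le_add_right m m) (SetLike.mul_mem_graded ha hb)) (add_mem ha hb)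
    simp only [Set.mem_ofPred_eq, mul_inv_rev, Units.val_mul]
    exact ⟨mul_sub_one_mem hu hv, mul_sub_one_mem hv' hu'⟩
  inv_mem' := fun ⟨hu, hu'⟩ => ⟨hu', by rwa [inv_inv]⟩

variable {I hI}

lemma val_inv_mem_zero_of_mem_unitsFiltration {m : ℕ} {u : Rˣ}
    (hu : u ∈ unitsFiltration I hI m) : ((u⁻¹ : Rˣ) : R) ∈ I 0 := by
  rw [← sub_add_cancel ((u⁻¹ : Rˣ) : R) 1]
  exact add_mem (hI (Nat.zero_le m) hu.2) (SetLike.one_mem_graded I)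

lemma val_commutatorElement_sub_one (u v : Rˣ) :
    ((⁅u, v⁆ : Rˣ) : R) - 1 =
      (((u : R) - 1) * ((v : R) - 1) - ((v : R) - 1) * ((u : R) - 1)) * ((u⁻¹ : Rˣ) : R) *
        ((v⁻¹ : Rˣ) : R) := by
  have hvu : (v : R) * u * ((u⁻¹ : Rˣ) : R) * ((v⁻¹ : Rˣ) : R) = 1 := by
    rw [mul_assoc (v : R), Units.mul_inv, mul_one, Units.mul_inv]
  calc ((⁅u, v⁆ : Rˣ) : R) - 1
      = u * v * ((u⁻¹ : Rˣ) : R) * ((v⁻¹ : Rˣ) : R) -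
          v * u * ((u⁻¹ : Rˣ) : R) * ((v⁻¹ : Rˣ) : R) := by
        rw [hvu, commutatorElement_def, Units.val_mul, Units.val_mul, Units.val_mul]
    _ = _ := by noncomm_ring

lemma commutatorElement_mem_unitsFiltration {p q : ℕ} {u v : Rˣ}
    (hu : u ∈ unitsFiltration I hI p) (hv : v ∈ unitsFiltration I hI q) :
    ⁅u, v⁆ ∈ unitsFiltration I hI (p + q) := by
  have val_sub_one_mem {p q : ℕ} {u v : Rˣ} (hu : u ∈ unitsFiltration I hI p)
      (hv : v ∈ unitsFiltration I hI q) : ((⁅u, v⁆ : Rˣ) : R) - 1 ∈ I (p + q) := by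
    rw [val_commutatorElement_sub_one]
    have hcomm : ((u : R) - 1) * ((v : R) - 1) - ((v : R) - 1) * ((u : R) - 1) ∈ I (p + q) :=
      sub_mem (SetLike.mul_mem_graded hu.1 hv.1)
        (add_comm q p ▸ SetLike.mul_mem_graded hv.1 hu.1)
    simpa using SetLike.mul_mem_graded
      (SetLike.mul_mem_graded hcomm (val_inv_mem_zero_of_mem_unitsFiltration hu))
      (val_inv_mem_zero_of_mem_unitsFiltration hv)
  refine ⟨val_sub_one_mem hu hv, ?_⟩
  rw [commutatorElement_inv, add_comm]
  exact val_sub_one_mem hv hu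

theorem lowerCentralSeries_le_comap_unitsFiltration {G : Type*} [Group G] (f : G →* Rˣ)
    (hf : f.range ≤ unitsFiltration I hI 1) (n : ℕ) :
    Subgroup.lowerCentralSeries ⊤ n ≤ (unitsFiltration I hI (n + 1)).comap f := by
  refine Subgroup.descending_central_series_ge_lower (G := G)
    (fun n => (unitsFiltration I hI (n + 1)).comap f) ⟨?_, fun x n hx g => ?_⟩ n
  · exact top_le_iff.1 fun g _ => hf ⟨g, rfl⟩
  · rw [Subgroup.mem_comap, map_commutatorElement]
    exact commutatorElement_mem_unitsFiltration hx (hf ⟨g, rfl⟩)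

end UnitsFiltration

section UnitOneAdd

variable {R : Type*} [Ring R] {N : R}

def unitOneAdd (N : R) (hN : N * N = 0) : Rˣ where
  val := 1 + N
  inv := 1 - N
  val_inv := by rw [add_mul, one_mul, mul_sub, mul_one, hN]; abel
  inv_val := by rw [sub_mul, one_mul, mul_add, mul_one, hN]; abel

lemma val_unitOneAdd_zpow (hN : N * N = 0) (e : ℤ) :
    ((unitOneAdd N hN ^ e : Rˣ) : R) = 1 + e • N := by
  induction e using Int.induction_on with
  | zero => simp
  | succ n ih =>
    rw [zpow_add_one, Units.val_mul, ih]
    change (1 + (n : ℤ) • N) * (1 + N) = _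
    rw [mul_add, mul_one, add_mul, one_mul, smul_mul_assoc, hN, smul_zero, add_zero, add_smul,
      one_smul, add_assoc]
  | pred n ih =>
    rw [zpow_sub_one, Units.val_mul, ih]
    change (1 + (-(n : ℤ)) • N) * (1 - N) = _
    rw [mul_sub, mul_one, add_mul, one_mul, smul_mul_assoc, hN, smul_zero, add_zero, sub_smul,
      one_smul, add_sub_assoc]

lemma unitOneAdd_mem_unitsFiltration {I : ℕ → AddSubgroup R} [SetLike.GradedMonoid I]
    {hI : Antitone I} (hN : N * N = 0) {m : ℕ} (hNm : N ∈ I m) :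
    unitOneAdd N hN ∈ unitsFiltration I hI m :=
  ⟨by simpa [unitOneAdd] using hNm, by simpa [unitOneAdd] using neg_mem hNm⟩

end UnitOneAdd

section LoweringFiltration

variable {R M : Type*} [Ring R] [AddCommGroup M] [Module R M] (W : ℕ → Submodule R M)

def loweringFiltration (m : ℕ) : AddSubgroup (Module.End R M) where
  carrier := {T | ∀ p, ∀ v ∈ W (p + m), T v ∈ W p}
  zero_mem' _ _ _ := zero_mem _
  add_mem' hS hT p v hv := add_mem (hS p v hv) (hT p v hv)
  neg_mem' hT p v hv := neg_mem (hT p v hv)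

instance : SetLike.GradedMonoid (loweringFiltration W) where
  one_mem _ _ hv := hv
  mul_mem m n S T hS hT p v hv := hS p (T v) (hT (p + m) v (by rwa [add_assoc]))

variable {W}

lemma loweringFiltration_antitone (hW : Monotone W) : Antitone (loweringFiltration W) :=
  fun _ _ hmn _ hT p v hv => hT p v (hW (Nat.add_le_add_left hmn p) hv)

end LoweringFiltration

def supportedBelow (p : ℕ) : Submodule ℤ (ℕ → ℤ) where
  carrier := {v | ∀ i, p ≤ i → v i = 0}
  zero_mem' _ _ := rfl
  add_mem' hv hw i hi := by simp [hv i hi, hw i hi]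
  smul_mem' c v hv i hi := by simp [hv i hi]

lemma supportedBelow_mono : Monotone supportedBelow :=
  fun _ _ hpq _ hv i hi => hv i (hpq.trans hi)

lemma apply_zero_eq_of_sub_one_mem_loweringFiltration {T : Module.End ℤ (ℕ → ℤ)} {m : ℕ}
    (hT : T - 1 ∈ loweringFiltration supportedBelow m) {v : ℕ → ℤ}
    (hv : v ∈ supportedBelow m) : T v 0 = v 0 := by
  simpa [sub_eq_zero] using hT 0 v (by rwa [zero_add]) 0 le_rfl

section LabelledShift

variable {α : Type*} [DecidableEq α] (L : List α)

def labelledShift (a : α) : Module.End ℤ (ℕ → ℤ) where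
  toFun v i := if L[i]? = some a then v (i + 1) else 0
  map_add' v v' := by ext i; by_cases h : L[i]? = some a <;> simp [h]
  map_smul' c v := by ext i; by_cases h : L[i]? = some a <;> simp [h]

lemma labelledShift_apply (a : α) (v : ℕ → ℤ) (i : ℕ) :
    labelledShift L a v i = if L[i]? = some a then v (i + 1) else 0 := rfl

variable {L}

lemma labelledShift_mul_self (hL : L.IsChain (· ≠ ·)) (a : α) :
    labelledShift L a * labelledShift L a = 0 := by
  ext v i
  simp only [Module.End.mul_apply, labelledShift_apply, LinearMap.zero_apply, Pi.zero_apply]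
  split_ifs with hi hi' <;> try rfl
  obtain ⟨hlt, hget⟩ := List.getElem?_eq_some_iff.1 hi'
  exact absurd ((List.getElem?_eq_some_iff.1 hi).2.trans hget.symm)
    (List.isChain_iff_getElem.1 hL i hlt)

lemma labelledShift_mem_loweringFiltration (a : α) :
    labelledShift L a ∈ loweringFiltration supportedBelow 1 :=
  fun p v hv i hi => by simp [labelledShift_apply, hv (i + 1) (by omega)]

lemma prod_map_one_add_smul_labelledShift_apply (C : List (α × ℤ)) (p : ℕ)
    (hC : C.map Prod.fst = L.drop p) (v : ℕ → ℤ) (hv : ∀ i < p + C.length, v i = 0) :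
    (∀ i < p, (C.map fun s => 1 + s.2 • labelledShift L s.1).prod v i = 0) ∧
      (C.map fun s => 1 + s.2 • labelledShift L s.1).prod v p =
        (C.map Prod.snd).prod * v (p + C.length) := by
  induction C generalizing p with
  | nil => exact ⟨fun i hi => by simpa using hv i (by simpa using hi), by simp⟩
  | cons s C ih =>
    have hhead : L[p]? = some s.1 := by rw [← List.head?_drop, ← hC]; rfl
    have htail : C.map Prod.fst = L.drop (p + 1) := by rw [← List.tail_drop, ← hC]; rfl
    obtain ⟨hlow, hlead⟩ := ih (p + 1) htail
      (fun i hi => hv i (by simp only [List.length_cons]; omega))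
    simp only [List.map_cons, List.prod_cons, Module.End.mul_apply, LinearMap.add_apply,
      Module.End.one_apply, LinearMap.smul_apply, Pi.add_apply, Pi.smul_apply,
      labelledShift_apply, smul_eq_mul]
    refine ⟨fun i hi => ?_, ?_⟩
    · rw [hlow i (by omega), hlow (i + 1) (by omega)]
      simp
    · rw [hlow p (by omega), if_pos hhead, hlead, List.length_cons, zero_add, mul_assoc,
        Nat.add_right_comm, add_assoc]

def labelledShiftRep (hL : L.IsChain (· ≠ ·)) : FreeGroup α →* (Module.End ℤ (ℕ → ℤ))ˣ :=
  FreeGroup.lift fun a => unitOneAdd (labelledShift L a) (labelledShift_mul_self hL a)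

lemma range_labelledShiftRep_le (hL : L.IsChain (· ≠ ·)) :
    (labelledShiftRep hL).range ≤ unitsFiltration (loweringFiltration supportedBelow)
      (loweringFiltration_antitone supportedBelow_mono) 1 :=
  FreeGroup.range_lift_le <| by
    rintro _ ⟨a, rfl⟩
    exact unitOneAdd_mem_unitsFiltration _ (labelledShift_mem_loweringFiltration a)

end LabelledShift

section Syllables

variable {α : Type*}

def syllableProd (B : List (α × ℤ)) : FreeGroup α :=
  (B.map fun s => FreeGroup.of s.1 ^ s.2).prod

structure IsReducedSyllables (B : List (α × ℤ)) : Prop where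
  isChain_fst : (B.map Prod.fst).IsChain (· ≠ ·)
  snd_ne_zero : ∀ s ∈ B, s.2 ≠ 0

lemma IsReducedSyllables.tail {s : α × ℤ} {B : List (α × ℤ)}
    (h : IsReducedSyllables (s :: B)) : IsReducedSyllables B :=
  ⟨h.isChain_fst.tail, fun t ht => h.snd_ne_zero t (List.mem_cons_of_mem s ht)⟩

lemma IsReducedSyllables.prod_snd_ne_zero {B : List (α × ℤ)} (hB : IsReducedSyllables B) :
    (B.map Prod.snd).prod ≠ 0 :=
  List.prod_ne_zero fun h => by
    obtain ⟨s, hs, hs0⟩ := List.mem_map.1 h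
    exact hB.snd_ne_zero s hs hs0

lemma exists_isReducedSyllables_zpow_mul [DecidableEq α] {B : List (α × ℤ)}
    (hB : IsReducedSyllables B) (a : α) (e : ℤ) :
    ∃ B', IsReducedSyllables B' ∧ syllableProd B' = FreeGroup.of a ^ e * syllableProd B := by
  by_cases he : e = 0
  · exact ⟨B, hB, by simp [he]⟩
  rcases B with _ | ⟨⟨b, f⟩, B⟩
  · exact ⟨[(a, e)], ⟨List.isChain_singleton a, by simpa using he⟩, by simp [syllableProd]⟩
  by_cases hab : a = b
  · subst hab
    have hprod : FreeGroup.of a ^ e * syllableProd ((a, f) :: B) =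
        FreeGroup.of a ^ (e + f) * syllableProd B := by
      simp [syllableProd, zpow_add, mul_assoc]
    by_cases hef : e + f = 0
    · exact ⟨B, hB.tail, by rw [hprod, hef, zpow_zero, one_mul]⟩
    · refine ⟨(a, e + f) :: B, ⟨by simpa using hB.isChain_fst, ?_⟩, by rw [hprod]; rfl⟩
      intro s hs
      rcases List.mem_cons.1 hs with rfl | hs
      exacts [hef, hB.snd_ne_zero s (List.mem_cons_of_mem _ hs)]
  · refine ⟨(a, e) :: (b, f) :: B, ⟨List.IsChain.cons_cons hab hB.isChain_fst, ?_⟩, rfl⟩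
    intro s hs
    rcases List.mem_cons.1 hs with rfl | hs
    exacts [he, hB.snd_ne_zero s hs]

lemma exists_isReducedSyllables (x : FreeGroup α) :
    ∃ B, IsReducedSyllables B ∧ syllableProd B = x := by
  classical
  have hx : x ∈ Subgroup.closure (Set.range FreeGroup.of) := by simp
  induction hx using Subgroup.closure_induction_left with
  | one => exact ⟨[], ⟨List.isChain_nil, by simp⟩, rfl⟩
  | mul_left _ ha _ _ ih =>
    obtain ⟨a, rfl⟩ := ha
    obtain ⟨B, hB, rfl⟩ := ih
    simpa using exists_isReducedSyllables_zpow_mul hB a 1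
  | inv_mul_cancel _ ha _ _ ih =>
    obtain ⟨a, rfl⟩ := ha
    obtain ⟨B, hB, rfl⟩ := ih
    simpa using exists_isReducedSyllables_zpow_mul hB a (-1)

lemma val_labelledShiftRep_syllableProd [DecidableEq α] {L : List α} (hL : L.IsChain (· ≠ ·))
    (B : List (α × ℤ)) :
    ((labelledShiftRep hL (syllableProd B) : (Module.End ℤ (ℕ → ℤ))ˣ) : Module.End ℤ (ℕ → ℤ)) =
      (B.map fun s => 1 + s.2 • labelledShift L s.1).prod := by
  rw [syllableProd, map_list_prod, ← Units.coeHom_apply, map_list_prod, List.map_map,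
    List.map_map]
  refine congrArg List.prod (List.map_congr_left fun s _ => ?_)
  simp [labelledShiftRep, val_unitOneAdd_zpow]

end Syllables

/-- Free groups are residually nilpotent: the intersection of the terms of the lower
central series of a free group is trivial. -/
theorem freeGroup_residually_nilpotent (α : Type*) :
    (⨅ i : ℕ, Subgroup.lowerCentralSeries (⊤ : Subgroup (FreeGroup α)) i) = ⊥ := by
  classical
  refine (Subgroup.eq_bot_iff_forall _).2 fun x hx => ?_
  obtain ⟨B, hB, rfl⟩ := exists_isReducedSyllables x
  by_contra hx1
  have hk : B.length ≠ 0 := fun h => hx1 (by rw [List.length_eq_zero_iff.1 h]; rfl)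
  set ρ := labelledShiftRep hB.isChain_fst
  set δ : ℕ → ℤ := Pi.single B.length 1
  have hρx := lowerCentralSeries_le_comap_unitsFiltration ρ (range_labelledShiftRep_le _)
    B.length (Subgroup.mem_iInf.1 hx _)
  have hfix : (ρ (syllableProd B) : Module.End ℤ (ℕ → ℤ)) δ 0 = 0 := by
    rw [apply_zero_eq_of_sub_one_mem_loweringFiltration hρx.1
      (v := δ) fun i hi => Pi.single_eq_of_ne (by omega) 1]
    exact Pi.single_eq_of_ne (Ne.symm hk) 1
  have hcomp : (ρ (syllableProd B) : Module.End ℤ (ℕ → ℤ)) δ 0 = (B.map Prod.snd).prod := by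
    rw [val_labelledShiftRep_syllableProd]
    simpa [δ] using (prod_map_one_add_smul_labelledShift_apply B 0 (by simp) δ
      fun i hi => Pi.single_eq_of_ne (by omega) 1).2
  exact hB.prod_snd_ne_zero (hcomp.symm.trans hfix)
end

section
/- Let F be the free group on generators a_1, b_1, ..., a_g, b_g with g ≥ 1, and let c = [a_1,b_1][a_2,b_2]⋯[a_g,b_g]. Then for every nonzero integer k, the element c^k a_1 c^{-k} a_1^{-1} lies in γ_2 F but does not lie in γ_3 F. Consequently, for k ≠ 0 the inner automorphism of F given by conjugation by c^k induces a nontrivial automorphism of the quotient F/γ_3 F. -/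
/-!
Send every `a_i` to `A` and every `b_i` to `B` in the unitriangular group `UT(4, ℤ)`, whose
lower central series reaches `1` at `γ_3`. Then `c ↦ ⁅A, B⁆ ^ g`, and
`c^k a_1 c^{-k} a_1⁻¹ = ⁅c^k, a_1⁆ ↦ ⁅⁅A, B⁆ ^ (g k), A⁆`, whose corner entry is
`2 g k ≠ 0`.
Homomorphisms preserve the lower central series, so `⁅c^k, a_1⁆ ∉ γ_3 F`.
-/

open scoped commutatorElement

theorem Subgroup.map_mem_lowerCentralSeries {G H : Type*} [Group G] [Group H] (f : G →* H)
    {n : ℕ} {x : G} (hx : x ∈ (⊤ : Subgroup G).lowerCentralSeries n) :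
    f x ∈ (⊤ : Subgroup H).lowerCentralSeries n :=
  lowerCentralSeries_mono n le_top <|
    map_lowerCentralSeries (⊤ : Subgroup G) f n ▸ mem_map_of_mem f hx

theorem QuotientGroup.mk_conj_eq_mk_iff {G : Type*} [Group G] {N : Subgroup G} [N.Normal]
    (g x : G) : (mk (g * x * g⁻¹) : G ⧸ N) = mk x ↔ ⁅g, x⁆ ∈ N := by
  rw [eq_iff_div_mem, div_eq_mul_inv, commutatorElement_def]

theorem FreeGroup.lift_sumElim_list_prod_commutator {G ι : Type*} [Group G] (x y : G)
    (l : List ι) :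
    lift (Sum.elim (fun _ : ι => x) (fun _ => y))
      ((l.map fun i => ⁅(of (Sum.inl i) : FreeGroup (ι ⊕ ι)), of (Sum.inr i)⁆).prod) =
      ⁅x, y⁆ ^ l.length := by
  simp [map_list_prod, Function.comp_def, map_commutatorElement, List.prod_replicate]

/-- Coordinates of the unitriangular matrix `[[1,p,q,r],[0,1,s,t],[0,0,1,u],[0,0,0,1]]`. -/
@[ext] structure UT4 where
  p : ℤ
  q : ℤ
  r : ℤ
  s : ℤ
  t : ℤ
  u : ℤ

namespace UT4

instance : Mul UT4 :=
  ⟨fun x y => ⟨x.p + y.p, x.q + y.q + x.p * y.s, x.r + y.r + x.p * y.t + x.q * y.u,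
    x.s + y.s, x.t + y.t + x.s * y.u, x.u + y.u⟩⟩

instance : One UT4 := ⟨⟨0, 0, 0, 0, 0, 0⟩⟩

instance : Inv UT4 :=
  ⟨fun x => ⟨-x.p, -x.q + x.p * x.s, -x.r + x.p * x.t + x.q * x.u - x.p * x.s * x.u,
    -x.s, -x.t + x.s * x.u, -x.u⟩⟩

@[simp] lemma mul_p (x y : UT4) : (x * y).p = x.p + y.p := rfl
@[simp] lemma mul_q (x y : UT4) : (x * y).q = x.q + y.q + x.p * y.s := rfl
@[simp] lemma mul_r (x y : UT4) : (x * y).r = x.r + y.r + x.p * y.t + x.q * y.u := rfl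
@[simp] lemma mul_s (x y : UT4) : (x * y).s = x.s + y.s := rfl
@[simp] lemma mul_t (x y : UT4) : (x * y).t = x.t + y.t + x.s * y.u := rfl
@[simp] lemma mul_u (x y : UT4) : (x * y).u = x.u + y.u := rfl
@[simp] lemma one_p : (1 : UT4).p = 0 := rfl
@[simp] lemma one_q : (1 : UT4).q = 0 := rfl
@[simp] lemma one_r : (1 : UT4).r = 0 := rfl
@[simp] lemma one_s : (1 : UT4).s = 0 := rfl
@[simp] lemma one_t : (1 : UT4).t = 0 := rfl
@[simp] lemma one_u : (1 : UT4).u = 0 := rfl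
@[simp] lemma inv_p (x : UT4) : x⁻¹.p = -x.p := rfl
@[simp] lemma inv_q (x : UT4) : x⁻¹.q = -x.q + x.p * x.s := rfl
@[simp] lemma inv_r (x : UT4) : x⁻¹.r = -x.r + x.p * x.t + x.q * x.u - x.p * x.s * x.u := rfl
@[simp] lemma inv_s (x : UT4) : x⁻¹.s = -x.s := rfl
@[simp] lemma inv_t (x : UT4) : x⁻¹.t = -x.t + x.s * x.u := rfl
@[simp] lemma inv_u (x : UT4) : x⁻¹.u = -x.u := rfl

instance : Group UT4 where
  mul_assoc x y z := by ext <;> simp <;> ring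
  one_mul x := by ext <;> simp
  mul_one x := by ext <;> simp
  inv_mul_cancel x := by ext <;> simp; ring

def superdiagKer : Subgroup UT4 where
  carrier := {x | x.p = 0 ∧ x.s = 0 ∧ x.u = 0}
  one_mem' := by simp
  mul_mem' := by rintro x y ⟨hxp, hxs, hxu⟩ ⟨hyp, hys, hyu⟩; simp_all
  inv_mem' := by rintro x ⟨hp, hs, hu⟩; simp_all

theorem commutator_mem_superdiagKer (x y : UT4) : ⁅x, y⁆ ∈ superdiagKer := by
  refine ⟨?_, ?_, ?_⟩ <;> simp [commutatorElement_def]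

theorem commutator_mem_center_of_mem_superdiagKer {x : UT4} (hx : x ∈ superdiagKer) (y : UT4) :
    ⁅x, y⁆ ∈ Subgroup.center UT4 := by
  obtain ⟨hp, hs, hu⟩ := hx
  rw [Subgroup.mem_center_iff]
  intro z
  ext <;> simp [commutatorElement_def, hp, hs, hu]; ring

def centralFiltration : ℕ → Subgroup UT4
  | 0 => ⊤
  | 1 => superdiagKer
  | 2 => Subgroup.center UT4
  | _ + 3 => ⊥

theorem isDescendingCentralSeries_centralFiltration :
    Subgroup.IsDescendingCentralSeries centralFiltration := by
  refine ⟨rfl, fun x n hx y => ?_⟩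
  match n, hx with
  | 0, _ => exact commutator_mem_superdiagKer x y
  | 1, hx => exact commutator_mem_center_of_mem_superdiagKer hx y
  | 2, hx =>
    rw [commutatorElement_eq_one_iff_commute.mpr (Subgroup.mem_center_iff.mp hx y).symm]
    exact Subgroup.one_mem _
  | _ + 3, hx =>
    rw [show x = 1 from hx, commutatorElement_one_left]
    exact Subgroup.one_mem _

theorem lowerCentralSeries_three_eq_bot : (⊤ : Subgroup UT4).lowerCentralSeries 3 = ⊥ :=
  le_bot_iff.mp (Subgroup.descending_central_series_ge_lower _
    isDescendingCentralSeries_centralFiltration 3)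

def A : UT4 := ⟨1, 0, 0, 0, 0, 1⟩

def B : UT4 := ⟨0, 0, 0, 1, 0, 0⟩

theorem commutator_A_B_zpow (m : ℤ) : ⁅A, B⁆ ^ m = ⟨0, m, -m, 0, -m, 0⟩ := by
  induction m using Int.induction_on with
  | zero => rfl
  | succ n ih => rw [zpow_add_one, ih]; ext <;> simp [commutatorElement_def, A, B] <;> ring
  | pred n ih => rw [zpow_sub_one, ih]; ext <;> simp [commutatorElement_def, A, B] <;> ring

theorem commutator_zpow_commutator_A_B_A_ne_one {m : ℤ} (hm : m ≠ 0) :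
    ⁅⁅A, B⁆ ^ m, A⁆ ≠ 1 := by
  intro h
  have hr := congrArg UT4.r h
  rw [commutator_A_B_zpow] at hr
  simp [commutatorElement_def, A] at hr
  omega

end UT4

/-- In the free group on `a_1, b_1, …, a_g, b_g` (`g ≥ 1`), with
`c = [a_1,b_1]⋯[a_g,b_g]`, for every nonzero integer `k` the element
`c^k a_1 c^{-k} a_1⁻¹` lies in `γ_2 F` but not in `γ_3 F`; consequently conjugation
by `c^k` induces a nontrivial automorphism of `F/γ_3 F`. -/
theorem boundary_twist_power_not_in_J3 (g : ℕ) (hg : 1 ≤ g) (k : ℤ) (hk : k ≠ 0) :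
    let F := FreeGroup (Fin g ⊕ Fin g)
    let a : Fin g → F := fun i => FreeGroup.of (Sum.inl i)
    let b : Fin g → F := fun i => FreeGroup.of (Sum.inr i)
    let c : F := ((List.finRange g).map (fun i => ⁅a i, b i⁆)).prod
    (c ^ k * a ⟨0, hg⟩ * c ^ (-k) * (a ⟨0, hg⟩)⁻¹ ∈ (⊤ : Subgroup F).lowerCentralSeries 2) ∧
    (c ^ k * a ⟨0, hg⟩ * c ^ (-k) * (a ⟨0, hg⟩)⁻¹ ∉ (⊤ : Subgroup F).lowerCentralSeries 3) ∧
    (∃ x : F, (QuotientGroup.mk (c ^ k * x * c ^ (-k)) : F ⧸ (⊤ : Subgroup F).lowerCentralSeries 3) ≠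
      QuotientGroup.mk x) := by
  intro F a b c
  set a₁ := a ⟨0, hg⟩
  rw [zpow_neg, ← commutatorElement_def]
  have hc : c ∈ (⊤ : Subgroup F).lowerCentralSeries 1 :=
    Subgroup.list_prod_mem _ <| by
      simpa using fun i =>
        Subgroup.commutator_mem_commutator (Subgroup.mem_top (a i)) (Subgroup.mem_top (b i))
  let φ : F →* UT4 := FreeGroup.lift (Sum.elim (fun _ => UT4.A) (fun _ => UT4.B))
  have hφ : φ ⁅c ^ k, a₁⁆ = ⁅⁅UT4.A, UT4.B⁆ ^ ((g : ℤ) * k), UT4.A⁆ := by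
    rw [map_commutatorElement, map_zpow, FreeGroup.lift_sumElim_list_prod_commutator,
      List.length_finRange, zpow_mul, zpow_natCast]
    rfl
  have hnot : ⁅c ^ k, a₁⁆ ∉ (⊤ : Subgroup F).lowerCentralSeries 3 := fun h => by
    have := Subgroup.map_mem_lowerCentralSeries φ h
    rw [UT4.lowerCentralSeries_three_eq_bot, Subgroup.mem_bot, hφ] at this
    exact UT4.commutator_zpow_commutator_A_B_A_ne_one (mul_ne_zero (by omega) hk) this
  refine ⟨Subgroup.lowerCentralSeries_isDescendingCentralSeries.2 _ 1
    (Subgroup.zpow_mem _ hc k) a₁, hnot, a₁, ?_⟩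
  rwa [Ne, QuotientGroup.mk_conj_eq_mk_iff]
end
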